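/- arXiv:2501.16170 — 2 statements merged into one kernel-verified Lean document; each statement's English description precedes it below -/
import Mathlib

section
/- Let r ∈ ℕ and let G be a connected graph whose binary cycle space is generated by cycles of length ≤ r. Let s and t be separations of G with r-tomic separators. Then s and t cross if and only if the induced r-local separations s_r and t_r cross. -/
namespace LS

open SimpleGraph

variable {V : Type*}

/-- `(A, B)` is an (oriented) separation of `G`: the two sides cover `V`
and there is no edge between `A ∖ B` and `B ∖ A`. -/
def IsSep (G : SimpleGraph V) (A B : Set V) : Prop :=
  A ∪ B = Set.univ ∧ ∀ a ∈ A \ B, ∀ b ∈ B \ A, ¬G.Adj a b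

/-- `(A,B) ≥ (C,D)` for oriented separations, i.e. `A ⊆ C` and `B ⊇ D`. -/
def SepGE (s t : Set V × Set V) : Prop := s.1 ⊆ t.1 ∧ t.2 ⊆ s.2

/-- Two (unoriented) separations are nested if they have `≥`-comparable orientations. -/
def Nested (s t : Set V × Set V) : Prop :=
  SepGE s t ∨ SepGE s (t.2, t.1) ∨ SepGE (s.2, s.1) t ∨ SepGE (s.2, s.1) (t.2, t.1)

/-- Two separations cross if they are not nested. -/
def Crosses (s t : Set V × Set V) : Prop := ¬Nested s t

/-- The neighbourhood `N_G(K)` of a vertex set `K`. -/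
def nbhdSet (G : SimpleGraph V) (K : Set V) : Set V :=
  {v | v ∉ K ∧ ∃ u ∈ K, G.Adj u v}

/-- `K` is (the vertex set of) a connected component of the subgraph of `G` induced on `S`. -/
def IsCompOf (G : SimpleGraph V) (K S : Set V) : Prop :=
  K.Nonempty ∧ K ⊆ S ∧ (G.induce K).Connected ∧ ∀ a ∈ K, ∀ b ∈ S, G.Adj a b → b ∈ K

/-- `K` is a component of `G − X` that is tight at `X`, i.e. `N_G(K) = X`. -/
def TightCompAt (G : SimpleGraph V) (K X : Set V) : Prop :=
  IsCompOf G K Xᶜ ∧ nbhdSet G K = X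

/-- A separation `{A,B}` is tight if `G − (A ∩ B)` has tight components
contained in `A` and in `B`, respectively. -/
def TightSep (G : SimpleGraph V) (A B : Set V) : Prop :=
  (∃ K, TightCompAt G K (A ∩ B) ∧ K ⊆ A) ∧ ∃ K, TightCompAt G K (A ∩ B) ∧ K ⊆ B

/-- `X` is a tight separator: `G − X` has at least two components tight at `X`. -/
def TightSeparator (G : SimpleGraph V) (X : Set V) : Prop :=
  ∃ K₁ K₂, K₁ ≠ K₂ ∧ TightCompAt G K₁ X ∧ TightCompAt G K₂ X

/-- The set `E_G(S,T)` of edges of `G` with one end in `S` and the other in `T`. -/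
def edgesBetween (G : SimpleGraph V) (S T : Set V) : Set (Sym2 V) :=
  {e | ∃ u v, G.Adj u v ∧ e = s(u, v) ∧ u ∈ S ∧ v ∈ T}

/-- `∂X`: the set of edges of `G` with exactly one end in `X`. -/
def edgeBdry (G : SimpleGraph V) (X : Set V) : Set (Sym2 V) :=
  {e | ∃ u v, G.Adj u v ∧ e = s(u, v) ∧ u ∈ X ∧ v ∉ X}

/-- The separator of an oriented separation. -/
def tsSep (s : Set V × Set V) : Set V := s.1 ∩ s.2

/-- `p` lists the three distinct oriented separations of a ⊤-star. -/
def IsTStar (G : SimpleGraph V) (p : Fin 3 → Set V × Set V) : Prop :=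
  Function.Injective p ∧ (∀ i, IsSep G (p i).1 (p i).2) ∧
  (∀ i j, i ≠ j → Disjoint ((p i).1 \ (p i).2) ((p j).1 \ (p j).2)) ∧
  (⋃ i, ((p i).1 \ (p i).2)) = (⋃ i, tsSep (p i))ᶜ ∧
  ∀ i, ∀ v ∈ tsSep (p i), ∃ j, j ≠ i ∧ v ∈ tsSep (p j)

/-- The centre `Z` of a ⊤-star. -/
def tsCentre (p : Fin 3 → Set V × Set V) : Set V := ⋂ i, tsSep (p i)

/-- The `ij`-link `X_{ij}` of a ⊤-star. -/
def tsLink (p : Fin 3 → Set V × Set V) (i j : Fin 3) : Set V :=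
  (tsSep (p i) ∩ tsSep (p j)) \ tsCentre p

/-- The ⊤-star `p` is relevant with base `p 0`. -/
def RelevantTStar (G : SimpleGraph V) (p : Fin 3 → Set V × Set V) : Prop :=
  IsTStar G p ∧ TightSep G (p 0).1 (p 0).2 ∧
  ∀ x ∈ tsLink p 1 2, ∀ i : Fin 3, i ≠ 0 →
    (∃ y ∈ tsLink p 0 i, G.Adj x y) ∨
    ∃ y ∈ tsLink p 0 i ∪ tsCentre p, ∃ K, IsCompOf G K ((p i).1 \ (p i).2) ∧
      x ∈ nbhdSet G K ∧ y ∈ nbhdSet G K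

/-- A bottleneck of order `k` in `G`, encoded as a set of oriented separations
closed under reversal (representing a set of unoriented separations). -/
def IsBottleneck (G : SimpleGraph V) (k : ℕ) (β : Set (Set V × Set V)) : Prop :=
  β.Nonempty ∧ (∀ s ∈ β, (s.2, s.1) ∈ β) ∧
  (∀ s ∈ β, IsSep G s.1 s.2 ∧ TightSep G s.1 s.2 ∧ (s.1 ∩ s.2).encard = k) ∧
  ∀ p : Fin 3 → Set V × Set V, RelevantTStar G p →
    (∀ i, (tsSep (p i)).encard ≤ (k : ℕ∞)) → p 0 ∈ β → p 1 ∈ β ∨ p 2 ∈ β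

/-! ### Tangles -/

/-- A tangle of order `ℓ` in `G`. -/
def IsTangle (G : SimpleGraph V) (ℓ : ℕ) (τ : Set (Set V × Set V)) : Prop :=
  (∀ s ∈ τ, IsSep G s.1 s.2 ∧ (s.1 ∩ s.2).encard < (ℓ : ℕ∞)) ∧
  (∀ A B : Set V, IsSep G A B → (A ∩ B).encard < (ℓ : ℕ∞) → ((A, B) ∈ τ ∨ (B, A) ∈ τ)) ∧
  (∀ A B : Set V, (A, B) ∈ τ → (B, A) ∈ τ → A = B) ∧
  ∀ s₁ ∈ τ, ∀ s₂ ∈ τ, ∀ s₃ ∈ τ,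
    ¬(s₁.1 ∪ s₂.1 ∪ s₃.1 = Set.univ ∧
      ∀ u v : V, G.Adj u v →
        (u ∈ s₁.1 ∧ v ∈ s₁.1) ∨ (u ∈ s₂.1 ∧ v ∈ s₂.1) ∨ (u ∈ s₃.1 ∧ v ∈ s₃.1))

/-- The separation `{A,B}` distinguishes the tangles `τ` and `τ'`. -/
def DistinguishesT (τ τ' : Set (Set V × Set V)) (A B : Set V) : Prop :=
  ((A, B) ∈ τ ∧ (B, A) ∈ τ') ∨ ((B, A) ∈ τ ∧ (A, B) ∈ τ')

/-- The separation `{A,B}` distinguishes the vertex sets `Y` and `Z`. -/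
def DistSets (Y Z A B : Set V) : Prop :=
  (Y ⊆ A ∧ (Y ∩ (A \ B)).Nonempty ∧ Z ⊆ B ∧ (Z ∩ (B \ A)).Nonempty) ∨
  (Y ⊆ B ∧ (Y ∩ (B \ A)).Nonempty ∧ Z ⊆ A ∧ (Z ∩ (A \ B)).Nonempty)

/-! ### The construction of the nested sets `N^k(G)` -/

/-- `X^k`: the union of all `k`-bottlenecks in `G`. -/
def Xk (G : SimpleGraph V) (k : ℕ) : Set (Set V × Set V) :=
  {s | ∃ β, IsBottleneck G k β ∧ s ∈ β}

/-- `x^k(s)`: the number of separations in `X^k` that `s` crosses. -/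
noncomputable def xk (G : SimpleGraph V) (k : ℕ) (s : Set V × Set V) : ℕ :=
  {t ∈ Xk G k | Crosses s t}.ncard

/-- `N^k(G,β)` relative to a previously constructed set `M` of separations:
the elements of `β` nested with `M` that minimise `x^k` among those. -/
def NkOfBeta (G : SimpleGraph V) (M : Set (Set V × Set V)) (k : ℕ)
    (β : Set (Set V × Set V)) : Set (Set V × Set V) :=
  {s ∈ β | (∀ t ∈ M, Nested s t) ∧
    ∀ s' ∈ β, (∀ t ∈ M, Nested s' t) → xk G k s ≤ xk G k s'}

/-- `N^k(G)` relative to a previously constructed set `M`. -/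
def NkStep (G : SimpleGraph V) (M : Set (Set V × Set V)) (k : ℕ) :
    Set (Set V × Set V) :=
  {s | ∃ β, IsBottleneck G k β ∧ s ∈ NkOfBeta G M k β}

/-- `N^{<k}(G) = ⋃_{j<k} N^j(G)`. -/
noncomputable def Nlt (G : SimpleGraph V) : ℕ → Set (Set V × Set V)
  | 0 => ∅
  | k + 1 => Nlt G k ∪ NkStep G (Nlt G k) k

/-- `N^k(G)`. -/
noncomputable def Nk (G : SimpleGraph V) (k : ℕ) : Set (Set V × Set V) :=
  NkStep G (Nlt G k) k

/-- `N(G) = ⋃_k N^k(G)`. -/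
noncomputable def NSet (G : SimpleGraph V) : Set (Set V × Set V) :=
  ⋃ k, Nk G k

/-! ### Walks, local components and local separations -/

/-- An `X`-walk: a walk having precisely its first and last vertex in `X`. -/
def IsXWalk (G : SimpleGraph V) (X : Set V) {u v : V} (W : G.Walk u v) : Prop :=
  u ∈ X ∧ v ∈ X ∧ ∀ w ∈ W.support, w ∈ X → w = u ∨ w = v

/-- An `r`-local `X`-walk: an `X`-walk contained in a cycle of length `≤ r`,
or an `X`-walk consisting of a single `X`-edge. -/
def IsLocalXWalk (G : SimpleGraph V) (r : ℕ) (X : Set V) {u v : V} (W : G.Walk u v) :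
    Prop :=
  IsXWalk G X W ∧
  ((∃ (a : V) (C : G.Walk a a), C.IsCycle ∧ C.length ≤ r ∧ ∀ e ∈ W.edges, e ∈ C.edges) ∨
    W.length = 1)

/-- An `r`-local `X`-path. -/
def IsLocalXPath (G : SimpleGraph V) (r : ℕ) (X : Set V) {u v : V} (W : G.Walk u v) :
    Prop :=
  IsLocalXWalk G r X W ∧ W.IsPath

/-- Walks that are concatenations of `r`-local `X`-paths. -/
inductive ConcatLocalPaths (G : SimpleGraph V) (r : ℕ) (X : Set V) :
    ∀ {u v : V}, G.Walk u v → Prop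
  | single {u v : V} (W : G.Walk u v) (h : IsLocalXPath G r X W) :
      ConcatLocalPaths G r X W
  | comp {u v w : V} (W₁ : G.Walk u v) (W₂ : G.Walk v w)
      (h₁ : IsLocalXPath G r X W₁) (h₂ : ConcatLocalPaths G r X W₂) :
      ConcatLocalPaths G r X (W₁.append W₂)

/-- `W ∈ W_r(X)`: `W` is a concatenation of `r`-local `X`-paths repeating no vertex of `X`. -/
def MemWr (G : SimpleGraph V) (r : ℕ) (X : Set V) {u v : V} (W : G.Walk u v) : Prop :=
  ConcatLocalPaths G r X W ∧ ∀ x ∈ X, ¬W.support.Duplicate x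

/-- `X` is `r`-tomic: any two of its vertices are joined by a walk in `W_r(X)`. -/
def Rtomic (G : SimpleGraph V) (r : ℕ) (X : Set V) : Prop :=
  ∀ x ∈ X, ∀ y ∈ X, x ≠ y → ∃ W : G.Walk x y, MemWr G r X W

/-- One step of the relation generating the `r`-local components at `X`:
`e = f`, or `e` and `f` are the first and last edges of an `r`-local `X`-walk
(both required to lie in `∂X`). -/
def LocalEdgeStep (G : SimpleGraph V) (r : ℕ) (X : Set V) (e f : Sym2 V) : Prop :=
  e ∈ edgeBdry G X ∧ f ∈ edgeBdry G X ∧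
  (e = f ∨ ∃ (u v : V) (W : G.Walk u v), IsLocalXWalk G r X W ∧
      W.edges.head? = some e ∧ W.edges.getLast? = some f)

/-- `F` is an `r`-local component at `X`: an equivalence class of the transitive
closure of `LocalEdgeStep` on `∂X`. -/
def LocalCompAt (G : SimpleGraph V) (r : ℕ) (X : Set V) (F : Set (Sym2 V)) : Prop :=
  ∃ e ∈ edgeBdry G X, F = {f | Relation.ReflTransGen (LocalEdgeStep G r X) e f}

/-- An edge set `F` is tight with respect to `X` if every vertex of `X`
is incident with an edge of `F`. -/
def TightLocalComp (X : Set V) (F : Set (Sym2 V)) : Prop :=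
  ∀ x ∈ X, ∃ e ∈ F, x ∈ e

/-- `X` is a tight `r`-local separator: at least two tight `r`-local components at `X`. -/
def TightLocalSeparator (G : SimpleGraph V) (r : ℕ) (X : Set V) : Prop :=
  ∃ F₁ F₂, F₁ ≠ F₂ ∧ LocalCompAt G r X F₁ ∧ LocalCompAt G r X F₂ ∧
    TightLocalComp X F₁ ∧ TightLocalComp X F₂

/-- `(E₁, X, E₂)` is an (oriented) `r`-local separation of `G`. -/
def IsLocalSep (G : SimpleGraph V) (r : ℕ) (E₁ : Set (Sym2 V)) (X : Set V)
    (E₂ : Set (Sym2 V)) : Prop :=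
  Disjoint E₁ E₂ ∧ E₁ ∪ E₂ = edgeBdry G X ∧
    ∀ F, LocalCompAt G r X F → F ⊆ E₁ ∨ F ⊆ E₂

/-- A tight `r`-local separation: each side includes a tight `r`-local component at `X`. -/
def TightLocalSep (G : SimpleGraph V) (r : ℕ) (E₁ : Set (Sym2 V)) (X : Set V)
    (E₂ : Set (Sym2 V)) : Prop :=
  IsLocalSep G r E₁ X E₂ ∧
  (∃ F, LocalCompAt G r X F ∧ TightLocalComp X F ∧ F ⊆ E₁) ∧
  ∃ F, LocalCompAt G r X F ∧ TightLocalComp X F ∧ F ⊆ E₂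

/-- The oriented `r`-local separation `s_r` induced by the oriented separation
`s = (A₁, A₂)`: its separator is `X = A₁ ∩ A₂`, and its sides are
`E_i = E_G(A_i ∖ X, X)`. -/
def inducedLocal (G : SimpleGraph V) (s : Set V × Set V) :
    Set (Sym2 V) × Set V × Set (Sym2 V) :=
  (edgesBetween G (s.1 \ (s.1 ∩ s.2)) (s.1 ∩ s.2), s.1 ∩ s.2,
    edgesBetween G (s.2 \ (s.1 ∩ s.2)) (s.1 ∩ s.2))

/-- Some cycle of `G` of length `≤ r` alternates between the disjoint sets `X` and `Y`:
it visits four distinct vertices `x, y, x', y'` in this cyclic order with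
`x, x' ∈ X` and `y, y' ∈ Y`. -/
def Alternates (G : SimpleGraph V) (r : ℕ) (X Y : Set V) : Prop :=
  ∃ (a : V) (C : G.Walk a a), C.IsCycle ∧ C.length ≤ r ∧
    ∃ (x y x' y' : V) (l₁ l₂ l₃ l₄ l₅ : List V),
      x ∈ X ∧ x' ∈ X ∧ y ∈ Y ∧ y' ∈ Y ∧ x ≠ x' ∧ y ≠ y' ∧
      C.support = l₁ ++ x :: l₂ ++ y :: l₃ ++ x' :: l₄ ++ y' :: l₅

/-- `X` and `Y` are `r`-coupled. -/
def RCoupled (G : SimpleGraph V) (r : ℕ) (X Y : Set V) : Prop :=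
  (X ∩ Y).Nonempty ∨ (Disjoint X Y ∧ Alternates G r X Y)

/-- The `X`-link for the side `Fi` of an `r`-local separation with separator `Y`:
vertices `x ∈ X ∖ Y` from which some walk in `W_r(X)` visits `Y` with its first
edge in `∂Y` lying in `Fi`. -/
def LocalLink (G : SimpleGraph V) (r : ℕ) (X Y : Set V) (Fi : Set (Sym2 V)) : Set V :=
  {x | x ∈ X \ Y ∧ ∃ (z : V) (W : G.Walk x z), MemWr G r X W ∧
      (∃ y ∈ Y, y ∈ W.support) ∧
      ∃ (e : Sym2 V) (l₁ l₂ : List (Sym2 V)), W.edges = l₁ ++ e :: l₂ ∧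
        e ∈ edgeBdry G Y ∧ e ∈ Fi ∧ ∀ e' ∈ l₁, e' ∉ edgeBdry G Y}

/-- The `r`-local separations `{E₁,X,E₂}` and `{F₁,Y,F₂}` cross. -/
def LocalCrosses (G : SimpleGraph V) (r : ℕ) (E₁ : Set (Sym2 V)) (X : Set V)
    (E₂ : Set (Sym2 V)) (F₁ : Set (Sym2 V)) (Y : Set V) (F₂ : Set (Sym2 V)) : Prop :=
  RCoupled G r X Y ∧ ∀ i j : Bool,
    (LocalLink G r X Y (cond j F₁ F₂)).Nonempty ∨
    (LocalLink G r Y X (cond i E₁ E₂)).Nonempty ∨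
    ((cond i E₁ E₂) ∩ (cond j F₁ F₂) ∩ edgeBdry G (X ∩ Y)).Nonempty

/-- The edge set of a walk, as a set. -/
def walkEdgeSet {G : SimpleGraph V} {a b : V} (W : G.Walk a b) : Set (Sym2 V) :=
  {e | e ∈ W.edges}

/-- The binary cycle space of `G` is generated by the cycles of length `≤ r`:
the edge set of every cycle is a symmetric difference of edge sets of cycles
of length `≤ r`. -/
def CycleSpaceGenShort (G : SimpleGraph V) (r : ℕ) : Prop :=
  ∀ ⦃a : V⦄ (C : G.Walk a a), C.IsCycle →
    ∃ L : List ((b : V) × G.Walk b b),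
      (∀ p ∈ L, p.2.IsCycle ∧ p.2.length ≤ r) ∧
      walkEdgeSet C = L.foldr (fun p E => symmDiff (walkEdgeSet p.2) E) ∅

/-! ### Local ⊤-stars and local bottlenecks -/

/-- `q` lists the three oriented `r`-local separations of an `r`-local ⊤-star. -/
def IsLocalTStar (G : SimpleGraph V) (r : ℕ)
    (q : Fin 3 → Set (Sym2 V) × Set V × Set (Sym2 V)) : Prop :=
  Function.Injective q ∧
  (∀ i, IsLocalSep G r (q i).1 (q i).2.1 (q i).2.2) ∧
  (∀ i j, i ≠ j → Disjoint (q i).1 (q j).1) ∧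
  (⋃ i, (q i).1) = edgeBdry G (⋃ i, (q i).2.1) ∧
  (∀ i, ∀ v ∈ (q i).2.1, ∃ j, j ≠ i ∧ v ∈ (q j).2.1) ∧
  ∀ F, LocalCompAt G r (⋃ i, (q i).2.1) F → ∃ i, F ⊆ (q i).1

/-- The `r`-local ⊤-star `q` is relevant with base `q 0`. -/
def RelevantLocalTStar (G : SimpleGraph V) (r : ℕ)
    (q : Fin 3 → Set (Sym2 V) × Set V × Set (Sym2 V)) : Prop :=
  IsLocalTStar G r q ∧ TightLocalSep G r (q 0).1 (q 0).2.1 (q 0).2.2 ∧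
  ∀ x ∈ ((q 1).2.1 ∩ (q 2).2.1) \ ⋂ j, (q j).2.1, ∀ i : Fin 3, i ≠ 0 →
    (∃ y ∈ ((q 0).2.1 ∩ (q i).2.1) \ ⋂ j, (q j).2.1, G.Adj x y) ∨
    ∃ F, LocalCompAt G r (⋃ j, (q j).2.1) F ∧ F ⊆ (q i).1 ∧
      (∃ e ∈ F, x ∈ e) ∧ ∃ e ∈ F, ∃ y ∈ (q 0).2.1 ∩ (q i).2.1, y ∈ e

/-- An `r`-local bottleneck of order `k` in `G`, encoded as a set of oriented
`r`-local separations closed under reversal. -/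
def IsLocalBottleneck (G : SimpleGraph V) (r k : ℕ)
    (β : Set (Set (Sym2 V) × Set V × Set (Sym2 V))) : Prop :=
  β.Nonempty ∧ (∀ q ∈ β, (q.2.2, q.2.1, q.1) ∈ β) ∧
  (∀ q ∈ β, TightLocalSep G r q.1 q.2.1 q.2.2 ∧ q.2.1.encard = (k : ℕ∞)) ∧
  ∀ p : Fin 3 → Set (Sym2 V) × Set V × Set (Sym2 V), RelevantLocalTStar G r p →
    (∀ i, ((p i).2.1).encard ≤ (k : ℕ∞)) → p 0 ∈ β → p 1 ∈ β ∨ p 2 ∈ β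

/-! If `(A₁, A₂) ≤ (C₁, C₂)`, a walk starting in `X ∖ Y ⊆ C₁ ∖ C₂` first enters `Y` through an
edge from `C₁`, never through `F₂`; so the `X`-link for `F₂` is empty, symmetrically so is the
`Y`-link for `E₁`, and `E₁ ∩ F₂ = ∅`. Nested separations thus induce nested local separations.

Conversely, let `s = {A₁, A₂}` and `t = {C₁, C₂}` cross; by connectivity `X` is nonempty. In
each corner, say `A₁`/`C₂`, either `X` meets `C₂ ∖ C₁`, or `Y` meets `A₁ ∖ A₂`, or the corner
`(A₁ ∖ A₂) ∩ (C₂ ∖ C₁)` is nonempty and a walk from it to `X` leaves it through an edge into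
`X ∪ Y`, which then gives one of the first two cases or an edge of `E₁ ∩ F₂` at `X ∩ Y`. A vertex
of `X` strictly in `C₂` is in the `X`-link for `F₂` as soon as `X` also meets `C₁`, because `X` is
`r`-tomic; if `X` misses `C₁`, the corners at `C₁` place `Y` on both sides of `s`, which puts a
vertex of `Y` into the `Y`-link for `E₁`. If `X ∩ Y = ∅`, the four corners force `X` or `Y` to
meet both strict sides of the other separation; an `r`-local path between these sides is not an
edge, so it lies on a cycle of length `≤ r`, and both arcs of that cycle between its ends pass
through the other separator: the separators alternate on a short cycle. -/

lemma _root_.List.exists_eq_append_cons_of_cons_sublist {α : Type*} {a : α} {l L : List α}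
    (h : List.Sublist (a :: l) L) : ∃ l₁ l₂, L = l₁ ++ a :: l₂ ∧ List.Sublist l l₂ := by
  obtain ⟨r₁, r₂, rfl, ha, hl⟩ := List.cons_sublist_iff.1 h
  obtain ⟨s₁, s₂, rfl⟩ := List.append_of_mem ha
  exact ⟨s₁, s₂ ++ r₂, by simp, hl.trans (List.sublist_append_right _ _)⟩

lemma _root_.SimpleGraph.Walk.sublist_tail_support {G : SimpleGraph V} [DecidableEq V]
    {a b c : V} (w : G.Walk a b) (hc : c ∈ w.support) (hac : a ≠ c) (hcb : c ≠ b) :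
    List.Sublist [c, b] w.support.tail := by
  rw [← w.take_spec hc, Walk.tail_support_append]
  exact (List.singleton_sublist.2 (Walk.end_mem_tail_support_of_ne hac _)).append
    (List.singleton_sublist.2 (Walk.end_mem_tail_support_of_ne hcb _))

section Separations

variable {G : SimpleGraph V}

lemma IsSep.symm {A B : Set V} (h : IsSep G A B) : IsSep G B A :=
  ⟨Set.union_comm A B ▸ h.1, fun b hb a ha hab => h.2 a ha b hb hab.symm⟩

lemma IsSep.mem_or_mem {A B : Set V} (h : IsSep G A B) (v : V) : v ∈ A ∨ v ∈ B := by
  simpa only [← Set.mem_union, h.1] using Set.mem_univ v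

lemma IsSep.mem_of_adj {A B : Set V} (h : IsSep G A B) {u w : V} (hu : u ∈ A \ B)
    (huw : G.Adj u w) : w ∈ A :=
  (h.mem_or_mem w).elim id fun hw => by_contra fun hwA => h.2 u hu w ⟨hw, hwA⟩ huw

lemma IsSep.exists_mem_support {A B Z : Set V} (h : IsSep G A B) (hZ : Z = A ∩ B) {p q : V}
    (W : G.Walk p q) (hp : p ∈ A \ B) (hq : q ∉ A \ B) : ∃ z ∈ W.support, z ∈ Z := by
  obtain ⟨d, hd, hfst, hsnd⟩ := W.exists_boundary_dart _ hp hq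
  have hA : d.snd ∈ A := h.mem_of_adj hfst d.adj
  exact ⟨d.snd, W.dart_snd_mem_support_of_mem_darts hd,
    hZ ▸ ⟨hA, by_contra fun hB => hsnd ⟨hA, hB⟩⟩⟩

lemma exists_first_edgeBdry {Z : Set V} {p q z : V} (W : G.Walk p q) (hp : p ∉ Z) (hz : z ∈ Z)
    (hzW : z ∈ W.support) :
    ∃ e l₁ l₂, W.edges = l₁ ++ e :: l₂ ∧ e ∈ edgeBdry G Z ∧ ∀ e' ∈ l₁, e' ∉ edgeBdry G Z := by
  induction W with
  | nil => exact absurd (List.mem_singleton.1 hzW ▸ hz) hp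
  | @cons p b q hpb W ih =>
    by_cases hb : b ∈ Z
    · exact ⟨s(p, b), [], W.edges, rfl, ⟨b, p, hpb.symm, Sym2.eq_swap, hb, hp⟩, by simp⟩
    have hzW' : z ∈ W.support := by
      rcases List.mem_cons.1 hzW with rfl | h
      · exact absurd hz hp
      · exact h
    obtain ⟨e, l₁, l₂, hW, he, hl₁⟩ := ih hb hzW'
    refine ⟨e, s(p, b) :: l₁, l₂, by simp [hW], he, fun e' he' => ?_⟩
    rcases List.mem_cons.1 he' with rfl | he'
    · rintro ⟨u, v, -, huv, hu, -⟩
      rcases Sym2.eq_iff.1 huv with ⟨hpu, -⟩ | ⟨-, hbu⟩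
      exacts [hp (hpu ▸ hu), hb (hbu ▸ hu)]
    · exact hl₁ e' he'

lemma IsSep.first_edgeBdry_mem_edgesBetween {D₁ D₂ Z : Set V} (h : IsSep G D₁ D₂)
    (hZ : Z = D₁ ∩ D₂) {p q : V} (W : G.Walk p q) (hp : p ∈ D₁ \ D₂) {e : Sym2 V}
    {l₁ l₂ : List (Sym2 V)} (hW : W.edges = l₁ ++ e :: l₂) (he : e ∈ edgeBdry G Z)
    (hl₁ : ∀ e' ∈ l₁, e' ∉ edgeBdry G Z) : e ∈ edgesBetween G (D₁ \ Z) Z := by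
  induction W generalizing l₁ with
  | nil => simp at hW
  | @cons p b q hpb W ih =>
    have hpZ : p ∉ Z := fun hpZ => hp.2 (hZ ▸ hpZ).2
    rcases l₁ with _ | ⟨f, l₁⟩
    · obtain rfl : s(p, b) = e := (List.cons.inj hW).1
      obtain ⟨u, v, -, huv, hu, -⟩ := he
      rcases Sym2.eq_iff.1 huv with ⟨hpu, -⟩ | ⟨-, hbu⟩
      · exact absurd (hpu ▸ hu) hpZ
      · exact ⟨p, b, hpb, rfl, ⟨hp.1, hpZ⟩, hbu ▸ hu⟩
    · obtain ⟨rfl, hW'⟩ := List.cons.inj hW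
      have hbZ : b ∉ Z := fun hbZ =>
        hl₁ _ List.mem_cons_self ⟨b, p, hpb.symm, Sym2.eq_swap, hbZ, hpZ⟩
      have hbD₁ : b ∈ D₁ := h.mem_of_adj hp hpb
      exact ih ⟨hbD₁, fun hbD₂ => hbZ (hZ ▸ ⟨hbD₁, hbD₂⟩)⟩ hW'
        fun e' he' => hl₁ e' (List.mem_cons_of_mem _ he')

lemma disjoint_edgesBetween_sides {D₁ D₂ Z : Set V} (hZ : Z = D₁ ∩ D₂) :
    Disjoint (edgesBetween G (D₁ \ Z) Z) (edgesBetween G (D₂ \ Z) Z) := by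
  subst hZ
  rw [Set.disjoint_left]
  rintro _ ⟨u, v, -, rfl, hu, -⟩ ⟨u', v', -, he, hu', hv'⟩
  rcases Sym2.eq_iff.1 he with ⟨rfl, -⟩ | ⟨rfl, -⟩
  · exact hu.2 ⟨hu.1, hu'.1⟩
  · exact hu.2 hv'

lemma nonempty_of_inter_edgeBdry {S : Set (Sym2 V)} {Z : Set V}
    (h : (S ∩ edgeBdry G Z).Nonempty) : Z.Nonempty := by
  obtain ⟨_, _, u, _, _, _, hu, _⟩ := h
  exact ⟨u, hu⟩

end Separations

lemma Crosses.symm {s t : Set V × Set V} (h : Crosses s t) : Crosses t s := by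
  simp only [Crosses, Nested, SepGE] at h ⊢
  tauto

lemma Crosses.swap_left {A₁ A₂ : Set V} {t : Set V × Set V} (h : Crosses (A₁, A₂) t) :
    Crosses (A₂, A₁) t := by
  simp only [Crosses, Nested, SepGE] at h ⊢
  tauto

lemma Crosses.swap_right {s : Set V × Set V} {C₁ C₂ : Set V} (h : Crosses s (C₁, C₂)) :
    Crosses s (C₂, C₁) := by
  simp only [Crosses, Nested, SepGE] at h ⊢
  tauto

lemma Crosses.inter_nonempty {G : SimpleGraph V} (hG : G.Connected) {A₁ A₂ : Set V}
    {t : Set V × Set V} (h : IsSep G A₁ A₂) (hcr : Crosses (A₁, A₂) t) :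
    (A₁ ∩ A₂).Nonempty := by
  have hSepGE : ∀ {B₁ B₂ : Set V}, IsSep G B₁ B₂ → B₁ = ∅ → SepGE (B₁, B₂) t :=
    fun hB h₀ => ⟨h₀ ▸ Set.empty_subset _,
      fun v _ => (hB.mem_or_mem v).resolve_left (by simp [h₀])⟩
  obtain ⟨a, ha⟩ := Set.nonempty_iff_ne_empty.2 fun h₀ => hcr (Or.inl (hSepGE h h₀))
  obtain ⟨b, hb⟩ := Set.nonempty_iff_ne_empty.2 fun h₀ =>
    hcr (Or.inr (Or.inr (Or.inl (hSepGE h.symm h₀))))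
  by_contra hX
  obtain ⟨W⟩ := hG.preconnected a b
  obtain ⟨z, -, hz⟩ :=
    h.exists_mem_support rfl W ⟨ha, fun ha' => hX ⟨a, ha, ha'⟩⟩ fun hb' => hb'.2 hb
  exact hX ⟨z, hz⟩

/-- The condition that `LocalCrosses` imposes on each pair of sides `E = Eᵢ`, `F = Fⱼ`. -/
def CornerLinked (G : SimpleGraph V) (r : ℕ) (X Y : Set V) (E F : Set (Sym2 V)) : Prop :=
  (LocalLink G r X Y F).Nonempty ∨ (LocalLink G r Y X E).Nonempty ∨
    (E ∩ F ∩ edgeBdry G (X ∩ Y)).Nonempty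

lemma cornerLinked_comm {G : SimpleGraph V} {r : ℕ} {X Y : Set V} {E F : Set (Sym2 V)} :
    CornerLinked G r Y X F E ↔ CornerLinked G r X Y E F := by
  simp only [CornerLinked, Set.inter_comm F E, Set.inter_comm Y X]
  tauto

section Links

variable {G : SimpleGraph V} {r : ℕ}

lemma mem_localLink {C₁ C₂ X Y : Set V} (h : IsSep G C₁ C₂) (hY : Y = C₁ ∩ C₂)
    (hX : Rtomic G r X) {x x' : V} (hx : x ∈ X ∩ (C₂ \ C₁)) (hx' : x' ∈ X ∩ C₁) :
    x ∈ LocalLink G r X Y (edgesBetween G (C₂ \ Y) Y) := by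
  have hY' : Y = C₂ ∩ C₁ := hY.trans (Set.inter_comm _ _)
  have hxY : x ∉ Y := fun hxY => hx.2.2 (hY ▸ hxY).1
  obtain ⟨W, hW⟩ := hX x hx.1 x' hx'.1 fun h => hx.2.2 (h ▸ hx'.2)
  obtain ⟨z, hzW, hz⟩ := h.symm.exists_mem_support hY' W hx.2 fun h => h.2 hx'.2
  obtain ⟨e, l₁, l₂, hWe, he, hl₁⟩ := exists_first_edgeBdry W hxY hz hzW
  exact ⟨⟨hx.1, hxY⟩, x', W, hW, ⟨z, hz, hzW⟩, e, l₁, l₂, hWe, he,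
    h.symm.first_edgeBdry_mem_edgesBetween hY' W hx.2 hWe he hl₁, hl₁⟩

lemma localLink_eq_empty {D₁ D₂ Z S : Set V} (h : IsSep G D₁ D₂) (hZ : Z = D₁ ∩ D₂)
    (hS : S \ Z ⊆ D₁ \ D₂) : LocalLink G r S Z (edgesBetween G (D₂ \ Z) Z) = ∅ := by
  refine Set.eq_empty_of_forall_notMem fun x ⟨hx, _, W, _, _, e, l₁, l₂, hWe, he, heD₂, hl₁⟩ => ?_
  have heD₁ := h.first_edgeBdry_mem_edgesBetween hZ W (hS hx) hWe he hl₁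
  exact Set.disjoint_left.1 (disjoint_edgesBetween_sides hZ) heD₁ heD₂

lemma not_cornerLinked_of_sepGE {A₁ A₂ C₁ C₂ X Y : Set V} (h₁ : IsSep G A₁ A₂)
    (h₂ : IsSep G C₁ C₂) (hX : X = A₁ ∩ A₂) (hY : Y = C₁ ∩ C₂)
    (hst : SepGE (A₁, A₂) (C₁, C₂)) :
    ¬ CornerLinked G r X Y (edgesBetween G (A₁ \ X) X) (edgesBetween G (C₂ \ Y) Y) := by
  obtain ⟨hAC, hCA⟩ := hst
  subst hX hY
  rintro (hlink | hlink | ⟨_, ⟨⟨u, v, -, rfl, hu, -⟩, ⟨u', v', -, he, hu', hv'⟩⟩, -⟩)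
  · refine hlink.ne_empty (localLink_eq_empty h₂ rfl ?_)
    exact fun x ⟨hx, hxY⟩ => ⟨hAC hx.1, fun hx₂ => hxY ⟨hAC hx.1, hx₂⟩⟩
  · refine hlink.ne_empty (localLink_eq_empty h₁.symm (Set.inter_comm _ _) ?_)
    exact fun y ⟨hy, hyX⟩ => ⟨hCA hy.2, fun hy₁ => hyX ⟨hy₁, hCA hy.2⟩⟩
  · rcases Sym2.eq_iff.1 he with ⟨rfl, -⟩ | ⟨rfl, -⟩
    · exact hu'.2 ⟨hAC hu.1, hu'.1⟩
    · exact hu.2 ⟨hu.1, hCA hv'.2⟩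

end Links

section Crossing

variable {G : SimpleGraph V} {r : ℕ}

lemma exists_adj_of_mem_corner (hG : G.Connected) {A₁ A₂ C₁ C₂ : Set V} (h₁ : IsSep G A₁ A₂)
    (h₂ : IsSep G C₁ C₂) (hX : (A₁ ∩ A₂).Nonempty) {v : V}
    (hv : v ∈ (A₁ \ A₂) ∩ (C₂ \ C₁)) :
    ∃ u ∈ (A₁ \ A₂) ∩ (C₂ \ C₁), ∃ w ∈ A₁ ∩ C₂, G.Adj u w ∧ (w ∈ A₂ ∨ w ∈ C₁) := by
  obtain ⟨x, hx⟩ := hX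
  obtain ⟨W⟩ := hG.preconnected v x
  obtain ⟨d, -, hu, hw⟩ := W.exists_boundary_dart _ hv fun h => h.1.2 hx.2
  have hwA₁ := h₁.mem_of_adj hu.1 d.adj
  have hwC₂ := h₂.symm.mem_of_adj hu.2 d.adj
  refine ⟨d.fst, hu, d.snd, ⟨hwA₁, hwC₂⟩, d.adj, ?_⟩
  by_contra! hw'
  exact hw ⟨⟨hwA₁, hw'.1⟩, hwC₂, hw'.2⟩

lemma mk_mem_corner_edges {A₁ A₂ C₁ C₂ X Y : Set V} (hX : X = A₁ ∩ A₂) (hY : Y = C₁ ∩ C₂)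
    {u w : V} (hu : u ∈ (A₁ \ A₂) ∩ (C₂ \ C₁)) (hwX : w ∈ X) (hwY : w ∈ Y) (huw : G.Adj u w) :
    s(u, w) ∈ edgesBetween G (A₁ \ X) X ∩ edgesBetween G (C₂ \ Y) Y ∩ edgeBdry G (X ∩ Y) := by
  have huX : u ∉ X := fun h => hu.1.2 (hX ▸ h).2
  exact ⟨⟨⟨u, w, huw, rfl, ⟨hu.1.1, huX⟩, hwX⟩,
    ⟨u, w, huw, rfl, ⟨hu.2.1, fun h => hu.2.2 (hY ▸ h).1⟩, hwY⟩⟩,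
    ⟨w, u, huw.symm, Sym2.eq_swap, ⟨hwX, hwY⟩, fun h => huX h.1⟩⟩

lemma corner_trichotomy (hG : G.Connected) {A₁ A₂ C₁ C₂ X Y : Set V} (h₁ : IsSep G A₁ A₂)
    (h₂ : IsSep G C₁ C₂) (hX : X = A₁ ∩ A₂) (hY : Y = C₁ ∩ C₂)
    (hcr : Crosses (A₁, A₂) (C₁, C₂)) :
    (X ∩ (C₂ \ C₁)).Nonempty ∨ (Y ∩ (A₁ \ A₂)).Nonempty ∨
      (edgesBetween G (A₁ \ X) X ∩ edgesBetween G (C₂ \ Y) Y ∩ edgeBdry G (X ∩ Y)).Nonempty := by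
  obtain ⟨v, hv, hvK⟩ : ∃ v ∈ A₁ ∩ C₂, v ∉ A₂ ∨ v ∉ C₁ := by
    have hst : ¬ (A₁ ⊆ C₁ ∧ C₂ ⊆ A₂) := fun hst => hcr (Or.inl hst)
    simp only [Set.not_subset, not_and_or] at hst
    rcases hst with ⟨v, hvA₁, hvC₁⟩ | ⟨v, hvC₂, hvA₂⟩
    · exact ⟨v, ⟨hvA₁, (h₂.mem_or_mem v).resolve_left hvC₁⟩, Or.inr hvC₁⟩
    · exact ⟨v, ⟨(h₁.mem_or_mem v).resolve_right hvA₂, hvC₂⟩, Or.inl hvA₂⟩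
  obtain ⟨w, ⟨hwA₁, hwC₂⟩, hw, hedge⟩ : ∃ w ∈ A₁ ∩ C₂, (w ∈ A₂ ∨ w ∈ C₁) ∧
      (w ∈ A₂ → w ∈ C₁ → ∃ u ∈ (A₁ \ A₂) ∩ (C₂ \ C₁), G.Adj u w) := by
    by_cases hvK' : v ∈ A₂ ∨ v ∈ C₁
    · exact ⟨v, hv, hvK', fun hA hC => (hvK.elim (· hA) (· hC)).elim⟩
    rw [not_or] at hvK'
    obtain ⟨u, hu, w, hw, huw, hw'⟩ := exists_adj_of_mem_corner hG h₁ h₂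
      (hcr.inter_nonempty hG h₁) ⟨⟨hv.1, hvK'.1⟩, hv.2, hvK'.2⟩
    exact ⟨w, hw, hw', fun _ _ => ⟨u, hu, huw⟩⟩
  by_cases hwA₂ : w ∈ A₂ <;> by_cases hwC₁ : w ∈ C₁
  · obtain ⟨u, hu, huw⟩ := hedge hwA₂ hwC₁
    exact Or.inr (Or.inr ⟨_, mk_mem_corner_edges hX hY hu (hX ▸ ⟨hwA₁, hwA₂⟩)
      (hY ▸ ⟨hwC₁, hwC₂⟩) huw⟩)
  · exact Or.inl ⟨w, hX ▸ ⟨hwA₁, hwA₂⟩, hwC₂, hwC₁⟩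
  · exact Or.inr (Or.inl ⟨w, hY ▸ ⟨hwC₁, hwC₂⟩, hwA₁, hwA₂⟩)
  · exact (hw.elim hwA₂ hwC₁).elim

lemma cornerLinked_of_crosses_of_nonempty (hG : G.Connected) {A₁ A₂ C₁ C₂ X Y : Set V}
    (h₁ : IsSep G A₁ A₂) (h₂ : IsSep G C₁ C₂) (hX : X = A₁ ∩ A₂) (hY : Y = C₁ ∩ C₂)
    (ht₁ : Rtomic G r X) (ht₂ : Rtomic G r Y) (hcr : Crosses (A₁, A₂) (C₁, C₂))
    (hXC₂ : (X ∩ (C₂ \ C₁)).Nonempty) :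
    CornerLinked G r X Y (edgesBetween G (A₁ \ X) X) (edgesBetween G (C₂ \ Y) Y) := by
  obtain ⟨x, hx⟩ := hXC₂
  by_cases hXC₁ : (X ∩ C₁).Nonempty
  · obtain ⟨x', hx'⟩ := hXC₁
    exact Or.inl ⟨x, mem_localLink h₂ hY ht₁ hx hx'⟩
  have hX' : X = A₂ ∩ A₁ := hX.trans (Set.inter_comm _ _)
  have hY' : Y = C₂ ∩ C₁ := hY.trans (Set.inter_comm _ _)
  have hXY : ¬ (X ∩ Y).Nonempty := fun ⟨z, hzX, hzY⟩ => hXC₁ ⟨z, hzX, (hY ▸ hzY).1⟩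
  -- `X` misses `C₁`, so the corners at `C₁` put vertices of `Y` on both sides of `s`
  obtain ⟨y, hy⟩ : (Y ∩ (A₁ \ A₂)).Nonempty := by
    rcases corner_trichotomy hG h₁ h₂.symm hX hY' hcr.swap_right with h | h | h
    · exact absurd (h.mono (Set.inter_subset_inter_right _ Set.sdiff_subset)) hXC₁
    · exact h
    · exact absurd (nonempty_of_inter_edgeBdry h) hXY
  obtain ⟨y', hy'⟩ : (Y ∩ (A₂ \ A₁)).Nonempty := by
    rcases corner_trichotomy hG h₁.symm h₂.symm hX' hY' hcr.swap_left.swap_right with h | h | h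
    · exact absurd (h.mono (Set.inter_subset_inter_right _ Set.sdiff_subset)) hXC₁
    · exact h
    · exact absurd (nonempty_of_inter_edgeBdry h) hXY
  exact Or.inr (Or.inl ⟨y, mem_localLink h₁.symm hX' ht₂ hy ⟨hy'.1, hy'.2.1⟩⟩)

lemma cornerLinked_of_crosses (hG : G.Connected) {A₁ A₂ C₁ C₂ X Y : Set V}
    (h₁ : IsSep G A₁ A₂) (h₂ : IsSep G C₁ C₂) (hX : X = A₁ ∩ A₂) (hY : Y = C₁ ∩ C₂)
    (ht₁ : Rtomic G r X) (ht₂ : Rtomic G r Y) (hcr : Crosses (A₁, A₂) (C₁, C₂)) :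
    CornerLinked G r X Y (edgesBetween G (A₁ \ X) X) (edgesBetween G (C₂ \ Y) Y) := by
  rcases corner_trichotomy hG h₁ h₂ hX hY hcr with hXC₂ | hYA₁ | hedge
  · exact cornerLinked_of_crosses_of_nonempty hG h₁ h₂ hX hY ht₁ ht₂ hcr hXC₂
  · exact cornerLinked_comm.1 <| cornerLinked_of_crosses_of_nonempty hG h₂.symm h₁.symm
      (hY.trans (Set.inter_comm _ _)) (hX.trans (Set.inter_comm _ _)) ht₂ ht₁
      hcr.symm.swap_left.swap_right hYA₁
  · exact Or.inr (Or.inr hedge)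

end Crossing

section Coupling

variable {G : SimpleGraph V} {r : ℕ}

lemma alternates_of_sublist {X Y : Set V} {a x y x' y' : V} {C : G.Walk a a} (hC : C.IsCycle)
    (hr : C.length ≤ r) (hx : x ∈ X) (hy : y ∈ Y) (hx' : x' ∈ X) (hy' : y' ∈ Y)
    (hxx' : x ≠ x') (hyy' : y ≠ y') (hsub : List.Sublist [x, y, x', y'] C.support) :
    Alternates G r X Y := by
  obtain ⟨l₁, m₁, e₁, h₁⟩ := List.exists_eq_append_cons_of_cons_sublist hsub
  obtain ⟨l₂, m₂, rfl, h₂⟩ := List.exists_eq_append_cons_of_cons_sublist h₁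
  obtain ⟨l₃, m₃, rfl, h₃⟩ := List.exists_eq_append_cons_of_cons_sublist h₂
  obtain ⟨l₄, l₅, rfl, -⟩ := List.exists_eq_append_cons_of_cons_sublist h₃
  exact ⟨a, C, hC, hr, x, y, x', y', l₁, l₂, l₃, l₄, l₅, hx, hx', hy, hy', hxx', hyy',
    by simp [e₁]⟩

lemma alternates_of_cycle {D₁ D₂ Z S : Set V} (h : IsSep G D₁ D₂) (hZ : Z = D₁ ∩ D₂)
    (hSZ : Disjoint S Z) {a u v : V} {O : G.Walk a a} (hO : O.IsCycle) (hr : O.length ≤ r)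
    (hu : u ∈ S ∩ (D₁ \ D₂)) (hv : v ∈ S ∩ (D₂ \ D₁)) (huO : u ∈ O.support)
    (hvO : v ∈ O.support) : Alternates G r S Z ∧ Alternates G r Z S := by
  classical
  set C := O.rotate u huO
  have hC : C.IsCycle := hO.rotate huO
  have hCr : C.length ≤ r := by simpa [C] using hr
  have hvC : v ∈ C.support := by simpa [C] using hvO
  obtain ⟨y, hyT, hy⟩ :=
    h.exists_mem_support hZ (C.takeUntil v hvC) hu.2 fun h' => h'.2 hv.2.1
  obtain ⟨y', hyD, hy'⟩ := h.symm.exists_mem_support (hZ.trans (Set.inter_comm _ _))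
    (C.dropUntil v hvC) hv.2 fun h' => h'.2 hu.2.1
  have hne : ∀ {s z : V}, s ∈ S → z ∈ Z → s ≠ z :=
    fun hs hz hsz => Set.disjoint_left.1 hSZ hs (hsz ▸ hz)
  have hsub : List.Sublist [y, v, y', u] C.support.tail := by
    rw [← C.take_spec hvC, Walk.tail_support_append]
    exact (Walk.sublist_tail_support _ hyT (hne hu.1 hy) (hne hv.1 hy).symm).append
      (Walk.sublist_tail_support _ hyD (hne hv.1 hy') (hne hu.1 hy').symm)
  have hnd : [y, v, y', u].Nodup := hC.support_nodup.sublist hsub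
  simp only [List.nodup_cons, List.mem_cons, List.not_mem_nil, or_false, not_or] at hnd
  constructor
  · refine alternates_of_sublist hC hCr hu.1 hy hv.1 hy' (Ne.symm hnd.2.1.2) hnd.1.2.1 ?_
    rw [← C.cons_tail_support]
    exact List.cons_sublist_cons.2 ((List.sublist_append_left [y, v, y'] [u]).trans hsub)
  · exact alternates_of_sublist hC hCr hy hv.1 hy' hu.1 hnd.1.2.1 hnd.2.1.2
      (hsub.trans (List.tail_sublist _))

lemma alternates_of_isLocalXWalk {D₁ D₂ Z S : Set V} (h : IsSep G D₁ D₂) (hZ : Z = D₁ ∩ D₂)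
    (hSZ : Disjoint S Z) {u v : V} {P : G.Walk u v} (hP : IsLocalXWalk G r S P)
    (hu : u ∈ D₁ \ D₂) (hv : v ∈ D₂ \ D₁) : Alternates G r S Z ∧ Alternates G r Z S := by
  rcases hP.2 with ⟨a, O, hO, hr, hPO⟩ | hlen
  · have hPnil : ¬ P.Nil := fun hnil => hu.2 (hnil.eq ▸ hv.1)
    have hPO' : ∀ w ∈ P.support, w ∈ O.support := fun w hw => by
      obtain ⟨e, he, hwe⟩ := (Walk.mem_support_iff_exists_mem_edges_of_not_nil hPnil).1 hw
      exact (Walk.mem_support_iff_exists_mem_edges_of_not_nil hO.not_nil).2 ⟨e, hPO e he, hwe⟩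
    exact alternates_of_cycle h hZ hSZ hO hr ⟨hP.1.1, hu⟩ ⟨hP.1.2.1, hv⟩
      (hPO' _ P.start_mem_support) (hPO' _ P.end_mem_support)
  · exact absurd (Walk.adj_of_length_eq_one hlen) (h.2 u hu v hv)

lemma ConcatLocalPaths.exists_localXPath_exit {X S : Set V} {p q : V} {W : G.Walk p q}
    (hW : ConcatLocalPaths G r X W) (hp : p ∈ S) (hq : q ∉ S) :
    ∃ (u v : V) (P : G.Walk u v), IsLocalXPath G r X P ∧ u ∈ S ∧ v ∉ S := by
  induction hW with
  | single W hW => exact ⟨_, _, W, hW, hp, hq⟩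
  | @comp u v w W₁ W₂ h₁ _ ih =>
    by_cases hv : v ∈ S
    · exact ih hv hq
    · exact ⟨u, v, W₁, h₁, hp, hv⟩

lemma alternates_of_rtomic {D₁ D₂ Z S : Set V} (h : IsSep G D₁ D₂) (hZ : Z = D₁ ∩ D₂)
    (hS : Rtomic G r S) (hSZ : Disjoint S Z) {x x' : V} (hx : x ∈ S ∩ (D₁ \ D₂))
    (hx' : x' ∈ S ∩ (D₂ \ D₁)) : Alternates G r S Z ∧ Alternates G r Z S := by
  obtain ⟨W, hW, -⟩ := hS x hx.1 x' hx'.1 fun hxx' => hx.2.2 (hxx' ▸ hx'.2.1)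
  obtain ⟨u, v, P, hP, hu, hv⟩ := hW.exists_localXPath_exit hx.2 fun h' => h'.2 hx'.2.1
  have hvZ : v ∉ Z := Set.disjoint_left.1 hSZ hP.1.1.2.1
  have hv₂ : v ∈ D₂ := (h.mem_or_mem v).resolve_left fun hv₁ =>
    hv ⟨hv₁, fun hv₂ => hvZ (hZ ▸ ⟨hv₁, hv₂⟩)⟩
  exact alternates_of_isLocalXWalk h hZ hSZ hP.1 hu ⟨hv₂, fun hv₁ => hvZ (hZ ▸ ⟨hv₁, hv₂⟩)⟩

lemma rCoupled_of_crosses (hG : G.Connected) {A₁ A₂ C₁ C₂ X Y : Set V}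
    (h₁ : IsSep G A₁ A₂) (h₂ : IsSep G C₁ C₂) (hX : X = A₁ ∩ A₂) (hY : Y = C₁ ∩ C₂)
    (ht₁ : Rtomic G r X) (ht₂ : Rtomic G r Y) (hcr : Crosses (A₁, A₂) (C₁, C₂)) :
    RCoupled G r X Y := by
  by_cases hXY : (X ∩ Y).Nonempty
  · exact Or.inl hXY
  have hdisj : Disjoint X Y :=
    Set.disjoint_iff_inter_eq_empty.2 (Set.not_nonempty_iff_eq_empty.1 hXY)
  refine Or.inr ⟨hdisj, ?_⟩
  have hX' : X = A₂ ∩ A₁ := hX.trans (Set.inter_comm _ _)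
  have hY' : Y = C₂ ∩ C₁ := hY.trans (Set.inter_comm _ _)
  have drop_edge : ∀ {P Q : Prop} {E : Set (Sym2 V)},
      P ∨ Q ∨ (E ∩ edgeBdry G (X ∩ Y)).Nonempty → P ∨ Q :=
    fun h => h.imp_right fun h => h.resolve_right fun hE => hXY (nonempty_of_inter_edgeBdry hE)
  have c₁₂ := drop_edge (corner_trichotomy hG h₁ h₂ hX hY hcr)
  have c₁₁ := drop_edge (corner_trichotomy hG h₁ h₂.symm hX hY' hcr.swap_right)
  have c₂₁ := drop_edge (corner_trichotomy hG h₁.symm h₂.symm hX' hY' hcr.swap_left.swap_right)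
  have c₂₂ := drop_edge (corner_trichotomy hG h₁.symm h₂ hX' hY hcr.swap_left)
  obtain ⟨⟨x, hx⟩, ⟨x', hx'⟩⟩ | ⟨⟨y, hy⟩, ⟨y', hy'⟩⟩ :
      ((X ∩ (C₁ \ C₂)).Nonempty ∧ (X ∩ (C₂ \ C₁)).Nonempty) ∨
        ((Y ∩ (A₁ \ A₂)).Nonempty ∧ (Y ∩ (A₂ \ A₁)).Nonempty) := by
    tauto
  · exact (alternates_of_rtomic h₂ hY ht₁ hdisj hx hx').1
  · exact (alternates_of_rtomic h₁ hX ht₂ hdisj.symm hy hy').2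

end Coupling

theorem statement16_general {V : Type*} (G : SimpleGraph V) (r : ℕ) (hG : G.Connected)
    (A₁ A₂ C₁ C₂ : Set V)
    (h₁ : IsSep G A₁ A₂) (h₂ : IsSep G C₁ C₂)
    (X Y : Set V) (E₁ E₂ F₁ F₂ : Set (Sym2 V))
    (hX : X = A₁ ∩ A₂) (hY : Y = C₁ ∩ C₂)
    (ht₁ : Rtomic G r X) (ht₂ : Rtomic G r Y)
    (hE₁ : E₁ = edgesBetween G (A₁ \ X) X) (hE₂ : E₂ = edgesBetween G (A₂ \ X) X)
    (hF₁ : F₁ = edgesBetween G (C₁ \ Y) Y) (hF₂ : F₂ = edgesBetween G (C₂ \ Y) Y) :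
    Crosses (A₁, A₂) (C₁, C₂) ↔ LocalCrosses G r E₁ X E₂ F₁ Y F₂ := by
  subst hE₁ hE₂ hF₁ hF₂
  have hX' : X = A₂ ∩ A₁ := hX.trans (Set.inter_comm _ _)
  have hY' : Y = C₂ ∩ C₁ := hY.trans (Set.inter_comm _ _)
  constructor
  · intro hcr
    refine ⟨rCoupled_of_crosses hG h₁ h₂ hX hY ht₁ ht₂ hcr, ?_⟩
    rintro (_ | _) (_ | _)
    · exact cornerLinked_of_crosses hG h₁.symm h₂ hX' hY ht₁ ht₂ hcr.swap_left
    · exact cornerLinked_of_crosses hG h₁.symm h₂.symm hX' hY' ht₁ ht₂ hcr.swap_left.swap_right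
    · exact cornerLinked_of_crosses hG h₁ h₂ hX hY ht₁ ht₂ hcr
    · exact cornerLinked_of_crosses hG h₁ h₂.symm hX hY' ht₁ ht₂ hcr.swap_right
  · rintro ⟨-, hlink⟩ (hst | hst | hst | hst)
    · exact not_cornerLinked_of_sepGE h₁ h₂ hX hY hst (hlink true false)
    · exact not_cornerLinked_of_sepGE h₁ h₂.symm hX hY' hst (hlink true true)
    · exact not_cornerLinked_of_sepGE h₁.symm h₂ hX' hY hst (hlink false false)
    · exact not_cornerLinked_of_sepGE h₁.symm h₂.symm hX' hY' hst (hlink false true)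

/-- For separations `s`, `t` of a connected graph `G` with
`r`-tomic separators (cycle space generated by cycles of length `≤ r`):
`s` and `t` cross if and only if `s_r` and `t_r` cross. -/
theorem statement16 {V : Type*} (G : SimpleGraph V) (r : ℕ) (hG : G.Connected)
    (hgen : CycleSpaceGenShort G r)
    (A₁ A₂ C₁ C₂ : Set V)
    (h₁ : IsSep G A₁ A₂) (h₂ : IsSep G C₁ C₂)
    (X Y : Set V) (E₁ E₂ F₁ F₂ : Set (Sym2 V))
    (hX : X = A₁ ∩ A₂) (hY : Y = C₁ ∩ C₂)
    (ht₁ : Rtomic G r X) (ht₂ : Rtomic G r Y)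
    (hE₁ : E₁ = edgesBetween G (A₁ \ X) X) (hE₂ : E₂ = edgesBetween G (A₂ \ X) X)
    (hF₁ : F₁ = edgesBetween G (C₁ \ Y) Y) (hF₂ : F₂ = edgesBetween G (C₂ \ Y) Y) :
    Crosses (A₁, A₂) (C₁, C₂) ↔ LocalCrosses G r E₁ X E₂ F₁ Y F₂ :=
  statement16_general G r hG A₁ A₂ C₁ C₂ h₁ h₂ X Y E₁ E₂ F₁ F₂ hX hY ht₁ ht₂ hE₁ hE₂ hF₁ hF₂

end LS
end

section
/- Let G be a graph, let r ≥ 2 be an integer, let X ⊆ V(G), and let W ∈ W_r(X) be a walk that uses exactly ℓ vertices of X. Then the endvertices of W have distance at most (ℓ−1)·r/2 in G. -/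
/-! The two ends of an `r`-local `X`-path both lie on one closed walk of length `≤ r` (or are
adjacent), so they are at distance `≤ r/2`. Each path of the concatenation adds one new vertex
of `X`, since none is repeated, so `W` consists of `ℓ − 1` such paths and the triangle
inequality gives the bound. -/

namespace SimpleGraph.Walk

variable {V : Type*} {G : SimpleGraph V} {a u v w : V}

theorem two_mul_dist_le_length_of_mem_support (C : G.Walk a a) (hu : u ∈ C.support)
    (hv : v ∈ C.support) : 2 * G.dist u v ≤ C.length := by
  classical
  set D := C.rotate u hu
  have hvD : v ∈ D.support := (C.mem_support_rotate_iff u hu).2 hv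
  have hsplit : (D.takeUntil v hvD).length + (D.dropUntil v hvD).length = C.length := by
    rw [← length_append, take_spec, length_rotate]
  have hto := dist_le (D.takeUntil v hvD)
  have hfro := dist_le (D.dropUntil v hvD)
  rw [dist_comm] at hfro
  omega

theorem two_mul_dist_le_length_of_edges_subset (C : G.Walk a a) (W : G.Walk u v)
    (hW : ∀ e ∈ W.edges, e ∈ C.edges) : 2 * G.dist u v ≤ C.length := by
  by_cases hnil : W.Nil
  · simp [hnil.eq]
  have hsupp : ∀ x ∈ W.support, x ∈ C.support := fun x hx => by
    obtain ⟨e, he, hxe⟩ := (mem_support_iff_exists_mem_edges_of_not_nil hnil).1 hx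
    exact C.mem_support_of_mem_edges (hW e he) hxe
  exact C.two_mul_dist_le_length_of_mem_support (hsupp u W.start_mem_support)
    (hsupp v W.end_mem_support)

theorem support_sublist_support_append (W₁ : G.Walk u v) (W₂ : G.Walk v w) :
    W₂.support.Sublist (W₁.append W₂).support := by
  rw [support_append_eq_support_dropLast_append]
  exact List.sublist_append_right _ _

theorem duplicate_support_append_of_mem_support (W₁ : G.Walk u v) (W₂ : G.Walk v w)
    (huv : u ≠ v) (hu : u ∈ W₂.support) : (W₁.append W₂).support.Duplicate u := by
  rw [support_append, ← W₁.cons_tail_support, List.cons_append]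
  rw [← W₂.cons_tail_support, List.mem_cons] at hu
  exact List.Mem.duplicate_cons_self (List.mem_append_right _ (hu.resolve_left huv))

end SimpleGraph.Walk

namespace LS

open SimpleGraph

variable {V : Type*} {G : SimpleGraph V} {r : ℕ} {X : Set V} {u v w : V}

theorem IsLocalXWalk.two_mul_dist_le (hr : 2 ≤ r) {W : G.Walk u v}
    (hW : IsLocalXWalk G r X W) : 2 * G.dist u v ≤ r := by
  rcases hW.2 with ⟨a, C, -, hCr, hsub⟩ | hlen
  · exact (C.two_mul_dist_le_length_of_edges_subset W hsub).trans hCr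
  · have := hlen ▸ dist_le W
    omega

theorem IsXWalk.setOf_mem_support_eq {W : G.Walk u v} (hW : IsXWalk G X W) :
    {x ∈ X | x ∈ W.support} = {u, v} := by
  ext x
  constructor
  · rintro ⟨hxX, hxW⟩
    exact hW.2.2 x hxW hxX
  · rintro (rfl | rfl)
    exacts [⟨hW.1, W.start_mem_support⟩, ⟨hW.2.1, W.end_mem_support⟩]

theorem IsXWalk.setOf_mem_support_append {W₁ : G.Walk u v} (hW₁ : IsXWalk G X W₁)
    (W₂ : G.Walk v w) :
    {x ∈ X | x ∈ (W₁.append W₂).support} = insert u {x ∈ X | x ∈ W₂.support} := by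
  ext x
  simp only [Walk.mem_support_append_iff, Set.mem_ofPred_eq, Set.mem_insert_iff]
  constructor
  · rintro ⟨hxX, hx₁ | hx₂⟩
    · rcases hW₁.2.2 x hx₁ hxX with rfl | rfl
      exacts [Or.inl rfl, Or.inr ⟨hxX, W₂.start_mem_support⟩]
    · exact Or.inr ⟨hxX, hx₂⟩
  · rintro (rfl | ⟨hxX, hx₂⟩)
    exacts [⟨hW₁.1, Or.inl W₁.start_mem_support⟩, ⟨hxX, Or.inr hx₂⟩]

theorem ConcatLocalPaths.two_mul_dist_le (hr : 2 ≤ r) {W : G.Walk u v}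
    (hW : ConcatLocalPaths G r X W) (hdup : ∀ x ∈ X, ¬W.support.Duplicate x) :
    2 * G.dist u v ≤ ({x ∈ X | x ∈ W.support}.ncard - 1) * r := by
  induction hW with
  | @single u v W h =>
    rw [h.1.1.setOf_mem_support_eq]
    rcases eq_or_ne u v with rfl | huv
    · simp
    · simpa [Set.ncard_pair huv] using h.1.two_mul_dist_le hr
  | @comp u v w W₁ W₂ h₁ _ ih =>
    have hdup₂ : ∀ x ∈ X, ¬W₂.support.Duplicate x := fun x hx hd =>
      hdup x hx (hd.mono_sublist (W₁.support_sublist_support_append W₂))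
    set S₂ := {x ∈ X | x ∈ W₂.support}
    rw [h₁.1.1.setOf_mem_support_append W₂]
    by_cases huS₂ : u ∈ S₂
    · obtain rfl : u = v := by
        by_contra huv
        exact hdup u huS₂.1 (W₁.duplicate_support_append_of_mem_support W₂ huv huS₂.2)
      rw [Set.insert_eq_of_mem huS₂]
      exact ih hdup₂
    have hS₂ : S₂.Finite := W₂.support.finite_toSet.subset fun x hx => hx.2
    have hS₂pos : 0 < S₂.ncard :=
      (Set.ncard_pos hS₂).2 ⟨v, h₁.1.1.2.1, W₂.start_mem_support⟩
    rw [Set.ncard_insert_of_notMem huS₂ hS₂, Nat.add_sub_cancel]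
    calc 2 * G.dist u w ≤ 2 * G.dist u v + 2 * G.dist v w := by
          linarith [Reachable.dist_triangle_left ⟨W₁⟩ w]
      _ ≤ r + (S₂.ncard - 1) * r := add_le_add (h₁.1.two_mul_dist_le hr) (ih hdup₂)
      _ = S₂.ncard * r := by
          obtain ⟨k, hk⟩ := Nat.exists_eq_add_one_of_ne_zero hS₂pos.ne'
          rw [hk, Nat.add_sub_cancel, add_one_mul, add_comm]

/-- If `r ≥ 2` and `W ∈ W_r(X)` uses exactly `ℓ` vertices of
`X`, then the endvertices of `W` have distance at most `(ℓ−1)·r/2` in `G`. -/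
theorem statement17 {V : Type*} (G : SimpleGraph V) (r : ℕ) (hr : 2 ≤ r)
    (X : Set V) (u v : V) (W : G.Walk u v) (hW : MemWr G r X W)
    (ℓ : ℕ) (hℓ : {x ∈ X | x ∈ W.support}.ncard = ℓ) :
    2 * G.dist u v ≤ (ℓ - 1) * r :=
  hℓ ▸ hW.1.two_mul_dist_le hr hW.2

end LS
end
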